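/- Let v = (-1, 1, 1)ᵀ ∈ ℝ³ and let M be the 3×3 real matrix with rows (1, 0, 1), (1, 1, 0), (0, 0, 1). For every real c > 0, the set function g(S) = (dist(v, Range M(S)))^c on subsets S ⊆ {1,2,3} is not supermodular: g({1,2}) − g({1,2,3}) > g({1}) − g({1,3}). -/

import Mathlib

/-!
The columns 1 and 2 of `M` span the plane `z = 0`, at distance `1` from `v`, while all three
columns span `ℝ³`; so the left-hand side is `1 ^ c - 0 ^ c = 1`. On the other hand `v` is
orthogonal to columns 1 and 3, so `g({1}) = g({1,3}) = ‖v‖` and the right-hand side is `0`.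
Column indices are `0`-based in Lean: the paper's `{1, 2}` is `{0, 1}`.
-/

/-- The column of the matrix `M` with index `j`, viewed as a vector in
Euclidean space (so that distances are Euclidean `ℓ²` distances). -/
noncomputable def col (M : Matrix (Fin 3) (Fin 3) ℝ) (j : Fin 3) :
    EuclideanSpace ℝ (Fin 3) :=
  (WithLp.equiv 2 (Fin 3 → ℝ)).symm fun i => M i j

/-- `Range M(S)`: the span of the columns of `M` with index in `S`. -/
noncomputable def colSpan (M : Matrix (Fin 3) (Fin 3) ℝ) (S : Set (Fin 3)) :
    Submodule ℝ (EuclideanSpace ℝ (Fin 3)) :=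
  Submodule.span ℝ (col M '' S)

/-- `g(S) = dist(v, Range M(S))^c` where `c` is a positive real exponent. -/
noncomputable def distPow (c : ℝ) (v : EuclideanSpace ℝ (Fin 3))
    (M : Matrix (Fin 3) (Fin 3) ℝ) (S : Set (Fin 3)) : ℝ :=
  (Metric.infDist v (colSpan M S : Set (EuclideanSpace ℝ (Fin 3)))) ^ c

open RealInnerProductSpace

section InnerProductSpace

variable {E : Type*} [NormedAddCommGroup E] [InnerProductSpace ℝ E]

theorem infDist_eq_norm_sub_of_sub_mem_orthogonal {K : Submodule ℝ E} {v w : E} (hw : w ∈ K)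
    (hvw : v - w ∈ Kᗮ) : Metric.infDist v K = ‖v - w‖ := by
  rw [Metric.infDist_eq_iInf,
    (K.norm_eq_iInf_iff_real_inner_eq_zero hw).2 ((K.mem_orthogonal' _).1 hvw)]
  exact iInf_congr fun y => dist_eq_norm _ _

theorem infDist_eq_norm_of_mem_orthogonal {K : Submodule ℝ E} {v : E} (hv : v ∈ Kᗮ) :
    Metric.infDist v K = ‖v‖ := by
  simpa using infDist_eq_norm_sub_of_sub_mem_orthogonal K.zero_mem (by simpa using hv)

end InnerProductSpace

theorem col_mem_colSpan {M : Matrix (Fin 3) (Fin 3) ℝ} {S : Set (Fin 3)} {j : Fin 3}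
    (hj : j ∈ S) : col M j ∈ colSpan M S :=
  Submodule.subset_span (Set.mem_image_of_mem _ hj)

theorem mem_orthogonal_colSpan {M : Matrix (Fin 3) (Fin 3) ℝ} {S : Set (Fin 3)}
    {v : EuclideanSpace ℝ (Fin 3)} (h : ∀ j ∈ S, ⟪col M j, v⟫ = 0) :
    v ∈ (colSpan M S)ᗮ :=
  (Submodule.span_singleton_le_iff_mem _ _).1 <| Submodule.IsOrtho.symm <|
    Submodule.isOrtho_span.2 <| by simpa using h

local notation "v₀" => Equiv.symm (WithLp.equiv 2 (Fin 3 → ℝ)) ![-1, 1, 1]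

local notation "M₀" => !![(1 : ℝ), 0, 1; 1, 1, 0; 0, 0, 1]

theorem infDist_colSpan_zero_one : Metric.infDist v₀ (colSpan M₀ {0, 1}) = 1 := by
  -- the foot of the perpendicular is `(-1, 1, 0)`, leaving the residual `(0, 0, 1)`
  have hw : -col M₀ 0 + (2 : ℝ) • col M₀ 1 ∈ colSpan M₀ {0, 1} :=
    add_mem (neg_mem (col_mem_colSpan (by simp)))
      (Submodule.smul_mem _ _ (col_mem_colSpan (by simp)))
  rw [infDist_eq_norm_sub_of_sub_mem_orthogonal hw]
  · simp [EuclideanSpace.norm_eq, Fin.sum_univ_three, col]; norm_num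
  · apply mem_orthogonal_colSpan
    simp [PiLp.inner_apply, Fin.sum_univ_three, col]; norm_num

theorem mem_colSpan_zero_one_two : v₀ ∈ colSpan M₀ {0, 1, 2} := by
  have hv : v₀ = (-2 : ℝ) • col M₀ 0 + (3 : ℝ) • col M₀ 1 + col M₀ 2 := by
    ext i; fin_cases i <;> simp [col] <;> norm_num
  rw [hv]
  refine add_mem (add_mem ?_ ?_) (col_mem_colSpan (by simp)) <;>
    exact Submodule.smul_mem _ _ (col_mem_colSpan (by simp))

theorem mem_orthogonal_colSpan_zero : v₀ ∈ (colSpan M₀ {0})ᗮ :=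
  mem_orthogonal_colSpan (by simp [PiLp.inner_apply, Fin.sum_univ_three, col])

theorem mem_orthogonal_colSpan_zero_two : v₀ ∈ (colSpan M₀ {0, 2})ᗮ :=
  mem_orthogonal_colSpan (by simp [PiLp.inner_apply, Fin.sum_univ_three, col])

/-- with `v = (-1,1,1)ᵀ` and `M` with rows `(1,0,1)`, `(1,1,0)`, `(0,0,1)`,
for every real `c > 0` the set function `g(S) = dist(v, Range M(S))^c` is not
supermodular: `g({1,2}) − g({1,2,3}) > g({1}) − g({1,3})`. -/
theorem distPow_not_supermodular :
    ∀ c : ℝ, 0 < c →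
      distPow c ((WithLp.equiv 2 (Fin 3 → ℝ)).symm ![-1, 1, 1]) !![1, 0, 1; 1, 1, 0; 0, 0, 1] {0, 1}
          - distPow c ((WithLp.equiv 2 (Fin 3 → ℝ)).symm ![-1, 1, 1]) !![1, 0, 1; 1, 1, 0; 0, 0, 1] {0, 1, 2}
        > distPow c ((WithLp.equiv 2 (Fin 3 → ℝ)).symm ![-1, 1, 1]) !![1, 0, 1; 1, 1, 0; 0, 0, 1] {0}
          - distPow c ((WithLp.equiv 2 (Fin 3 → ℝ)).symm ![-1, 1, 1]) !![1, 0, 1; 1, 1, 0; 0, 0, 1] {0, 2} := by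
  intro c hc
  simp only [distPow, infDist_colSpan_zero_one, Metric.infDist_zero_of_mem mem_colSpan_zero_one_two,
    infDist_eq_norm_of_mem_orthogonal mem_orthogonal_colSpan_zero,
    infDist_eq_norm_of_mem_orthogonal mem_orthogonal_colSpan_zero_two]
  simp [hc.ne']
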